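/- For every compact K ⊂ ℝ there exists a constant C < ∞ such that for all s ∈ K and all γ ∈ ℝ, writing ζ = s + iγ, every twice continuously differentiable function f : I → ℂ with f(−r) = f(r) = 0 satisfies −Re ∫_I (H_ζ f)(x) · conj(f(x)) dx ≥ ∫_I |f′(x)|² dx + γ² ∫_I a(x)²·|f(x)|² dx − C·((1 + |γ|)·‖f‖²_{L²(I)} + ‖f‖_{L²(I)}·‖f′‖_{L²(I)}). -/

import Mathlib

open MeasureTheory Set

/-- The ordinary differential operator `H_ζ` acting on functions on `ℝ`:
`(H_ζ f)(x) = f″(x) + (β₁(x)+β₂(x))·f′(x)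
  + (ζ²·a(x)² − iζ·a′(x) + iζ·a(x)·(β₁(x)−β₂(x)) + β₃(x))·f(x)`. -/
noncomputable def Hop (a : ℝ → ℝ) (β₁ β₂ β₃ : ℝ → ℂ) (ζ : ℂ) (f : ℝ → ℂ) (x : ℝ) : ℂ :=
  deriv (deriv f) x + (β₁ x + β₂ x) * deriv f x +
    (ζ ^ 2 * (Complex.ofReal (a x)) ^ 2 - Complex.I * ζ * Complex.ofReal (deriv a x)
      + Complex.I * ζ * Complex.ofReal (a x) * (β₁ x - β₂ x) + β₃ x) * f x

/-- The `L²` norm of `f` over the set `J ⊆ ℝ` (w.r.t. Lebesgue measure). -/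
noncomputable def L2 (f : ℝ → ℂ) (J : Set ℝ) : ℝ := (∫ x in J, ‖f x‖ ^ 2) ^ ((1 : ℝ)/2)

lemma L2_sq (f : ℝ → ℂ) (J : Set ℝ) : L2 f J ^ 2 = ∫ x in J, ‖f x‖ ^ 2 := by
  have hx : (0:ℝ) ≤ ∫ x in J, ‖f x‖ ^ 2 := integral_nonneg (fun x => sq_nonneg _)
  rw [L2, ← Real.rpow_natCast (_ ^ ((1:ℝ)/2)) 2, ← Real.rpow_mul hx]
  norm_num

lemma L2_nonneg (f : ℝ → ℂ) (J : Set ℝ) : 0 ≤ L2 f J :=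
  Real.rpow_nonneg (integral_nonneg (fun _ => sq_nonneg _)) _

lemma holder2 (r : ℝ) (f g : ℝ → ℂ) (hf : Continuous f) (hg : Continuous g) :
    ∫ x in Icc (-r) r, ‖f x‖ * ‖g x‖ ≤ L2 f (Icc (-r) r) * L2 g (Icc (-r) r) := by
  set μ := volume.restrict (Icc (-r) r)
  obtain ⟨Mf, hMf⟩ := isCompact_Icc.exists_bound_of_continuousOn (hf.continuousOn (s := Icc (-r) r))
  obtain ⟨Mg, hMg⟩ := isCompact_Icc.exists_bound_of_continuousOn (hg.continuousOn (s := Icc (-r) r))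
  have hmem : ∀ (h : ℝ → ℂ) (M : ℝ), Continuous h → (∀ x ∈ Icc (-r) r, ‖h x‖ ≤ M) →
      MemLp (fun x => ‖h x‖) (ENNReal.ofReal 2) μ := by
    intro h M hc hM
    refine MemLp.of_bound (hc.norm.aestronglyMeasurable) M ?_
    refine (ae_restrict_iff' measurableSet_Icc).mpr (ae_of_all _ fun x hx => ?_)
    simpa [Real.norm_eq_abs, abs_of_nonneg (norm_nonneg (h x))] using hM x hx
  have key := integral_mul_le_Lp_mul_Lq_of_nonneg (μ := μ)
    Real.HolderConjugate.two_two
    (f := fun x => ‖f x‖) (g := fun x => ‖g x‖)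
    (ae_of_all _ fun x => norm_nonneg _) (ae_of_all _ fun x => norm_nonneg _)
    (hmem f Mf hf hMf) (hmem g Mg hg hMg)
  have e1 : ∀ (h : ℝ → ℂ), (∫ x, ‖h x‖ ^ (2:ℝ) ∂μ) = ∫ x in Icc (-r) r, ‖h x‖ ^ 2 := fun h =>
    integral_congr_ae (ae_of_all _ fun x => Real.rpow_two _)
  rw [e1, e1] at key
  simpa [L2] using key

lemma conj_hasDerivAt {f : ℝ → ℂ} {f' : ℂ} {x : ℝ} (h : HasDerivAt f f' x) :
    HasDerivAt (fun y => (starRingEnd ℂ) (f y)) ((starRingEnd ℂ) f') x := by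
  have := (Complex.conjCLE.hasFDerivAt (x := f x)).comp_hasDerivAt x h
  exact h.star

lemma ibp (r : ℝ) (f : ℝ → ℂ) (hf : ContDiff ℝ 2 f)
    (h1 : f (-r) = 0) (h2 : f r = 0) :
    ∫ x in (-r)..r, deriv (deriv f) x * (starRingEnd ℂ) (f x)
      = -∫ x in (-r)..r, ((‖deriv f x‖ : ℝ) : ℂ) ^ 2 := by
  have hf1 : ContDiff ℝ 1 (deriv f) := by
    have := (contDiff_succ_iff_deriv (n := 1)).mp (by exact_mod_cast hf)
    exact this.2.2
  have hdf : Differentiable ℝ f := hf.differentiable (by norm_num)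
  have hddf : Differentiable ℝ (deriv f) := hf1.differentiable one_ne_zero
  have hcont_df : Continuous (deriv f) := hf1.continuous
  have hcont_ddf : Continuous (deriv (deriv f)) := by
    have := (contDiff_succ_iff_deriv (n := 0)).mp hf1
    exact this.2.2.continuous
  have key := intervalIntegral.integral_deriv_mul_eq_sub_of_hasDerivAt
    (u := deriv f) (v := fun x => (starRingEnd ℂ) (f x))
    (u' := deriv (deriv f)) (v' := fun x => (starRingEnd ℂ) (deriv f x))
    (a := -r) (b := r)
    (hcont_df.continuousOn)
    ((Complex.continuous_conj.comp hf.continuous).continuousOn)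
    (fun x _ => (hddf x).hasDerivAt)
    (fun x _ => conj_hasDerivAt (hdf x).hasDerivAt)
    (hcont_ddf.intervalIntegrable _ _)
    ((Complex.continuous_conj.comp hcont_df).intervalIntegrable _ _)
  simp only [h1, h2, map_zero, mul_zero, sub_zero] at key
  have split : ∫ x in (-r)..r, (deriv (deriv f) x * (starRingEnd ℂ) (f x)
      + deriv f x * (starRingEnd ℂ) (deriv f x))
      = (∫ x in (-r)..r, deriv (deriv f) x * (starRingEnd ℂ) (f x))
        + ∫ x in (-r)..r, deriv f x * (starRingEnd ℂ) (deriv f x) :=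
    intervalIntegral.integral_add
      ((hcont_ddf.mul (Complex.continuous_conj.comp hf.continuous)).intervalIntegrable _ _)
      ((hcont_df.mul (Complex.continuous_conj.comp hcont_df)).intervalIntegrable _ _)
  have heq : ∀ x : ℝ, deriv f x * (starRingEnd ℂ) (deriv f x) = ((‖deriv f x‖ : ℝ) : ℂ) ^ 2 := by
    intro x
    rw [Complex.mul_conj, Complex.normSq_eq_norm_sq]
    push_cast; ring
  rw [split] at key
  rw [show (∫ x in (-r)..r, deriv f x * (starRingEnd ℂ) (deriv f x))
      = ∫ x in (-r)..r, ((‖deriv f x‖ : ℝ) : ℂ) ^ 2 from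
    intervalIntegral.integral_congr (fun x _ => heq x)] at key
  linear_combination key

set_option maxHeartbeats 1000000 in
/-- Gårding-type inequality: for `s` in a compact set, `ζ = s + iγ`, and `f` vanishing at
the endpoints of `I`,
`-Re⟨H_ζ f, f⟩ ≥ ‖f′‖² + γ²∫ a²|f|² − C((1+|γ|)‖f‖² + ‖f‖·‖f′‖)`. -/
theorem garding_inequality (r : ℝ) (hr : 0 < r) (a : ℝ → ℝ) (ha : ContDiff ℝ (⊤ : ℕ∞) a)
    (ha0 : ∀ x ∈ Icc (-r) r, a x ≠ 0)
    (β₁ β₂ β₃ : ℝ → ℂ) (hβ₁ : ContDiff ℝ (⊤ : ℕ∞) β₁) (hβ₂ : ContDiff ℝ (⊤ : ℕ∞) β₂)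
    (hβ₃ : ContDiff ℝ (⊤ : ℕ∞) β₃)
    (K : Set ℝ) (hK : IsCompact K) :
    ∃ C : ℝ, ∀ s ∈ K, ∀ γ : ℝ,
      ∀ f : ℝ → ℂ, ContDiff ℝ 2 f → f (-r) = 0 → f r = 0 →
        (∫ x in Icc (-r) r, ‖deriv f x‖ ^ 2)
          + γ ^ 2 * (∫ x in Icc (-r) r, (a x) ^ 2 * ‖f x‖ ^ 2)
          - C * ((1 + |γ|) * L2 f (Icc (-r) r) ^ 2
              + L2 f (Icc (-r) r) * L2 (deriv f) (Icc (-r) r))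
        ≤ - (∫ x in Icc (-r) r,
              Hop a β₁ β₂ β₃ (Complex.mk s γ) f x * starRingEnd ℂ (f x)).re := by
  -- bounds
  obtain ⟨S₀, hS₀⟩ := hK.isBounded.subset_closedBall 0
  set S : ℝ := max S₀ 0 with hS_def
  have hS : ∀ s ∈ K, |s| ≤ S := by
    intro s hs
    have := hS₀ hs
    simp only [Metric.mem_closedBall, Real.dist_eq, sub_zero] at this
    exact this.trans (le_max_left _ _)
  have hSnn : 0 ≤ S := le_max_right _ _
  have hca : Continuous a := ha.continuous
  have hca' : Continuous (deriv a) := ha.continuous_deriv (by simp)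
  obtain ⟨A₀, hA₀⟩ := isCompact_Icc.exists_bound_of_continuousOn
    (hca.continuousOn (s := Icc (-r) r))
  obtain ⟨A₁, hA₁⟩ := isCompact_Icc.exists_bound_of_continuousOn
    (hca'.continuousOn (s := Icc (-r) r))
  obtain ⟨B₁, hB₁⟩ := isCompact_Icc.exists_bound_of_continuousOn
    (hβ₁.continuous.continuousOn (s := Icc (-r) r))
  obtain ⟨B₂, hB₂⟩ := isCompact_Icc.exists_bound_of_continuousOn
    (hβ₂.continuous.continuousOn (s := Icc (-r) r))
  obtain ⟨B₃, hB₃⟩ := isCompact_Icc.exists_bound_of_continuousOn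
    (hβ₃.continuous.continuousOn (s := Icc (-r) r))
  set A : ℝ := max A₀ 0
  set A' : ℝ := max A₁ 0
  set D₁ : ℝ := max B₁ 0
  set D₂ : ℝ := max B₂ 0
  set D₃ : ℝ := max B₃ 0
  have hA : ∀ x ∈ Icc (-r) r, |a x| ≤ A := fun x hx => (hA₀ x hx).trans (le_max_left _ _)
  have hA' : ∀ x ∈ Icc (-r) r, |deriv a x| ≤ A' := fun x hx => (hA₁ x hx).trans (le_max_left _ _)
  have hD₁ : ∀ x ∈ Icc (-r) r, ‖β₁ x‖ ≤ D₁ := fun x hx => (hB₁ x hx).trans (le_max_left _ _)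
  have hD₂ : ∀ x ∈ Icc (-r) r, ‖β₂ x‖ ≤ D₂ := fun x hx => (hB₂ x hx).trans (le_max_left _ _)
  have hD₃ : ∀ x ∈ Icc (-r) r, ‖β₃ x‖ ≤ D₃ := fun x hx => (hB₃ x hx).trans (le_max_left _ _)
  have hAnn : 0 ≤ A := le_max_right _ _
  have hA'nn : 0 ≤ A' := le_max_right _ _
  have hD₁nn : 0 ≤ D₁ := le_max_right _ _
  have hD₂nn : 0 ≤ D₂ := le_max_right _ _
  have hD₃nn : 0 ≤ D₃ := le_max_right _ _
  set M : ℝ := A' + A * (D₁ + D₂) with hM_def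
  have hMnn : 0 ≤ M := by positivity
  set Cc : ℝ := S^2 * A^2 + (S + 1) * M + D₃ with hCc_def
  have hCcnn : 0 ≤ Cc := by positivity
  refine ⟨Cc + (D₁ + D₂), ?_⟩
  intro s hs γ f hf h1 h2
  set ζ : ℂ := Complex.mk s γ with hζ_def
  have hζre : ζ.re = s := rfl
  have hζim : ζ.im = γ := rfl
  have hζabs : ‖ζ‖ ≤ S + |γ| := by
    refine (Complex.norm_le_abs_re_add_abs_im ζ).trans ?_
    rw [hζre, hζim]
    exact add_le_add_left (hS s hs) _
  set Q : ℝ → ℂ := fun x => ζ ^ 2 * (Complex.ofReal (a x)) ^ 2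
      - Complex.I * ζ * Complex.ofReal (deriv a x)
      + Complex.I * ζ * Complex.ofReal (a x) * (β₁ x - β₂ x) + β₃ x with hQ_def
  set rest : ℝ → ℂ := fun x => (β₁ x + β₂ x) * deriv f x * (starRingEnd ℂ) (f x)
      + Q x * ((‖f x‖ ^ 2 : ℝ) : ℂ) with hrest_def
  have hfc : ∀ x, f x * (starRingEnd ℂ) (f x) = ((‖f x‖ ^ 2 : ℝ) : ℂ) := by
    intro x
    rw [Complex.mul_conj]
    exact congrArg Complex.ofReal (by rw [Complex.normSq_eq_norm_sq])
  have hHop : ∀ x, Hop a β₁ β₂ β₃ ζ f x * (starRingEnd ℂ) (f x)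
      = deriv (deriv f) x * (starRingEnd ℂ) (f x) + rest x := by
    intro x
    simp only [Hop, hrest_def, hQ_def, ← hfc x]
    ring
  -- continuity
  have hf1 : ContDiff ℝ 1 (deriv f) := by
    have := (contDiff_succ_iff_deriv (n := 1)).mp (by exact_mod_cast hf)
    exact this.2.2
  have hcf : Continuous f := hf.continuous
  have hcdf : Continuous (deriv f) := hf1.continuous
  have hcddf : Continuous (deriv (deriv f)) := by
    have := (contDiff_succ_iff_deriv (n := 0)).mp hf1
    exact this.2.2.continuous
  have hcconjf : Continuous fun x => (starRingEnd ℂ) (f x) := Complex.continuous_conj.comp hcf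
  have hcQ : Continuous Q := by
    apply Continuous.add
    apply Continuous.add
    apply Continuous.sub
    · exact continuous_const.mul ((Complex.continuous_ofReal.comp hca).pow 2)
    · exact continuous_const.mul (Complex.continuous_ofReal.comp hca')
    · exact (continuous_const.mul (Complex.continuous_ofReal.comp hca)).mul
        (hβ₁.continuous.sub hβ₂.continuous)
    · exact hβ₃.continuous
  have hcn2 : Continuous fun x => ((‖f x‖ ^ 2 : ℝ) : ℂ) :=
    Complex.continuous_ofReal.comp ((hcf.norm).pow 2)
  have hcrest : Continuous rest :=
    (((hβ₁.continuous.add hβ₂.continuous).mul hcdf).mul hcconjf).add (hcQ.mul hcn2)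
  -- integrability
  have int_dd : IntegrableOn (fun x => deriv (deriv f) x * (starRingEnd ℂ) (f x))
      (Icc (-r) r) volume := (hcddf.mul hcconjf).integrableOn_Icc
  have int_rest : IntegrableOn rest (Icc (-r) r) volume := hcrest.integrableOn_Icc
  -- Step A : value of the integral
  have hdd : (∫ x in Icc (-r) r, deriv (deriv f) x * (starRingEnd ℂ) (f x))
      = -Complex.ofReal (∫ x in Icc (-r) r, ‖deriv f x‖ ^ 2) := by
    rw [integral_Icc_eq_integral_Ioc,
      ← intervalIntegral.integral_of_le (by linarith : -r ≤ r), ibp r f hf h1 h2,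
      show (fun x => ((‖deriv f x‖ : ℝ) : ℂ) ^ 2) = fun x => ((‖deriv f x‖ ^ 2 : ℝ) : ℂ) from
        funext fun x => by push_cast; ring,
      intervalIntegral.integral_of_le (by linarith : -r ≤ r),
      ← integral_Icc_eq_integral_Ioc]
    have hcast : ∫ x in Icc (-r) r, ((‖deriv f x‖^2 : ℝ) : ℂ)
        = Complex.ofReal (∫ x in Icc (-r) r, ‖deriv f x‖^2) := by
      simpa using Complex.ofRealCLM.integral_comp_comm
        (((hcdf.norm.pow 2)).integrableOn_Icc (a := -r) (b := r))
    rw [hcast]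
  have hsplit : (∫ x in Icc (-r) r, Hop a β₁ β₂ β₃ ζ f x * (starRingEnd ℂ) (f x))
      = (∫ x in Icc (-r) r, deriv (deriv f) x * (starRingEnd ℂ) (f x))
        + ∫ x in Icc (-r) r, rest x := by
    rw [← integral_add int_dd int_rest]
    exact integral_congr_ae (ae_of_all _ fun x => hHop x)
  have hre : (∫ x in Icc (-r) r, Hop a β₁ β₂ β₃ ζ f x * (starRingEnd ℂ) (f x)).re
      = -(∫ x in Icc (-r) r, ‖deriv f x‖ ^ 2) + ∫ x in Icc (-r) r, (rest x).re := by
    have hint_re : ∫ x in Icc (-r) r, (rest x).re = (∫ x in Icc (-r) r, rest x).re := by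
      simpa using Complex.reCLM.integral_comp_comm int_rest
    rw [hsplit, hdd, Complex.add_re, Complex.neg_re, Complex.ofReal_re, ← hint_re]
  -- Step B : pointwise bound
  have hpt : ∀ x ∈ Icc (-r) r, (rest x).re
      ≤ -(γ^2) * ((a x)^2 * ‖f x‖^2) + (D₁ + D₂) * (‖f x‖ * ‖deriv f x‖)
        + (Cc * (1 + |γ|)) * ‖f x‖^2 := by
    intro x hx
    have hF : (0:ℝ) ≤ ‖f x‖^2 := sq_nonneg _
    have hax2 : (a x)^2 ≤ A^2 := sq_le_sq' (by linarith [abs_le.mp (hA x hx) |>.1]) (abs_le.mp (hA x hx)).2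
    have hs2 : s^2 ≤ S^2 := sq_le_sq' (by linarith [abs_le.mp (hS s hs) |>.1]) (abs_le.mp (hS s hs)).2
    have hγnn : (0:ℝ) ≤ |γ| := abs_nonneg _
    -- real part of Q
    have hQre : (Q x).re ≤ (s^2 - γ^2) * (a x)^2 + (S + |γ|) * M + D₃ := by
      have hqsplit : Q x = ζ ^ 2 * ((( (a x)^2 : ℝ)) : ℂ)
          + (- (Complex.I * ζ * Complex.ofReal (deriv a x))
             + Complex.I * ζ * Complex.ofReal (a x) * (β₁ x - β₂ x) + β₃ x) := by
        simp only [hQ_def]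
        push_cast
        ring
      have hre1 : (ζ ^ 2 * (((a x)^2 : ℝ) : ℂ)).re = (s^2 - γ^2) * (a x)^2 := by
        simp [Complex.mul_re, Complex.ofReal_re, Complex.ofReal_im, pow_two, hζre, hζim]
        try ring
      set E : ℂ := - (Complex.I * ζ * Complex.ofReal (deriv a x))
             + Complex.I * ζ * Complex.ofReal (a x) * (β₁ x - β₂ x) + β₃ x with hE_def
      have hEabs : ‖E‖ ≤ (S + |γ|) * M + D₃ := by
        have t1 : ‖- (Complex.I * ζ * Complex.ofReal (deriv a x))‖
            ≤ (S + |γ|) * A' := by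
          rw [norm_neg, norm_mul, norm_mul, Complex.norm_I, one_mul, Complex.norm_real, Real.norm_eq_abs]
          exact mul_le_mul hζabs (hA' x hx) (abs_nonneg _) (by positivity)
        have t2 : ‖Complex.I * ζ * Complex.ofReal (a x) * (β₁ x - β₂ x)‖
            ≤ (S + |γ|) * (A * (D₁ + D₂)) := by
          rw [norm_mul, norm_mul, norm_mul, Complex.norm_I, one_mul, Complex.norm_real, Real.norm_eq_abs]
          have hb : ‖β₁ x - β₂ x‖ ≤ D₁ + D₂ := by
            exact (norm_sub_le _ _).trans (add_le_add (hD₁ x hx) (hD₂ x hx))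
          have : |a x| * ‖β₁ x - β₂ x‖ ≤ A * (D₁ + D₂) :=
            mul_le_mul (hA x hx) hb (by positivity) hAnn
          calc ‖ζ‖ * |a x| * ‖β₁ x - β₂ x‖
              = ‖ζ‖ * (|a x| * ‖β₁ x - β₂ x‖) := by ring
            _ ≤ (S + |γ|) * (A * (D₁ + D₂)) :=
              mul_le_mul hζabs this (by positivity) (by positivity)
        have t3 : ‖β₃ x‖ ≤ D₃ := by
          exact hD₃ x hx
        calc ‖E‖
            ≤ ‖- (Complex.I * ζ * Complex.ofReal (deriv a x))
                + Complex.I * ζ * Complex.ofReal (a x) * (β₁ x - β₂ x)‖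
              + ‖β₃ x‖ := by rw [hE_def]; exact norm_add_le _ _
          _ ≤ ‖- (Complex.I * ζ * Complex.ofReal (deriv a x))‖
              + ‖Complex.I * ζ * Complex.ofReal (a x) * (β₁ x - β₂ x)‖
              + ‖β₃ x‖ := by
                have := norm_add_le (- (Complex.I * ζ * Complex.ofReal (deriv a x)))
                  (Complex.I * ζ * Complex.ofReal (a x) * (β₁ x - β₂ x))
                linarith
          _ ≤ (S + |γ|) * A' + (S + |γ|) * (A * (D₁ + D₂)) + D₃ := by linarith
          _ = (S + |γ|) * M + D₃ := by rw [hM_def]; ring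
      have : (Q x).re = (s^2 - γ^2) * (a x)^2 + E.re := by
        rw [hqsplit, Complex.add_re, hre1]
      rw [this]
      have := (Complex.re_le_norm E).trans hEabs
      linarith
    -- first term bound
    have hfirst : ((β₁ x + β₂ x) * deriv f x * (starRingEnd ℂ) (f x)).re
        ≤ (D₁ + D₂) * (‖f x‖ * ‖deriv f x‖) := by
      refine (Complex.re_le_norm _).trans ?_
      rw [norm_mul, norm_mul, Complex.norm_conj]
      have hb : ‖β₁ x + β₂ x‖ ≤ D₁ + D₂ :=
        (norm_add_le _ _).trans (add_le_add (hD₁ x hx) (hD₂ x hx))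
      calc ‖β₁ x + β₂ x‖ * ‖deriv f x‖ * ‖f x‖
          ≤ (D₁ + D₂) * ‖deriv f x‖ * ‖f x‖ := by
            apply mul_le_mul_of_nonneg_right _ (norm_nonneg _)
            exact mul_le_mul_of_nonneg_right hb (norm_nonneg _)
        _ = (D₁ + D₂) * (‖f x‖ * ‖deriv f x‖) := by ring
    -- second term
    have hsecond : (Q x * ((‖f x‖ ^ 2 : ℝ) : ℂ)).re = (Q x).re * ‖f x‖^2 := by
      rw [mul_comm, Complex.re_ofReal_mul]
      ring
    have hrestre : (rest x).re = ((β₁ x + β₂ x) * deriv f x * (starRingEnd ℂ) (f x)).re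
        + (Q x).re * ‖f x‖^2 := by
      rw [hrest_def]
      simp only [Complex.add_re]
      rw [hsecond]
    rw [hrestre]
    have hscal : s^2 * (a x)^2 + ((S + |γ|) * M + D₃) ≤ Cc * (1 + |γ|) := by
      rw [hCc_def]
      nlinarith [mul_le_mul hs2 hax2 (sq_nonneg (a x)) (sq_nonneg S), sq_nonneg S,
        mul_nonneg hSnn hγnn, mul_nonneg hMnn hγnn, mul_nonneg hD₃nn hγnn,
        mul_nonneg (mul_nonneg hSnn hSnn) (mul_nonneg hAnn hAnn)]
    have hQF : (Q x).re * ‖f x‖^2 ≤ ((s^2 - γ^2) * (a x)^2 + (S + |γ|) * M + D₃) * ‖f x‖^2 :=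
      mul_le_mul_of_nonneg_right hQre hF
    have hscalF : (s^2 * (a x)^2 + ((S + |γ|) * M + D₃)) * ‖f x‖^2
        ≤ (Cc * (1 + |γ|)) * ‖f x‖^2 := mul_le_mul_of_nonneg_right hscal hF
    nlinarith [hfirst, hQF, hscalF]
  -- Step C : integrate the pointwise bound
  have int_restre : IntegrableOn (fun x => (rest x).re) (Icc (-r) r) volume :=
    (Complex.continuous_re.comp hcrest).integrableOn_Icc
  have hc1 : Continuous fun x => (a x)^2 * ‖f x‖^2 := ((hca.pow 2)).mul ((hcf.norm).pow 2)
  have hc2 : Continuous fun x => ‖f x‖ * ‖deriv f x‖ := (hcf.norm).mul (hcdf.norm)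
  have hc3 : Continuous fun x => ‖f x‖^2 := (hcf.norm).pow 2
  have int_g : IntegrableOn (fun x => -(γ^2) * ((a x)^2 * ‖f x‖^2)
      + (D₁ + D₂) * (‖f x‖ * ‖deriv f x‖) + (Cc * (1 + |γ|)) * ‖f x‖^2) (Icc (-r) r) volume :=
    (((continuous_const.mul hc1).add (continuous_const.mul hc2)).add
      (continuous_const.mul hc3)).integrableOn_Icc
  have hmono : (∫ x in Icc (-r) r, (rest x).re)
      ≤ ∫ x in Icc (-r) r, (-(γ^2) * ((a x)^2 * ‖f x‖^2)
          + (D₁ + D₂) * (‖f x‖ * ‖deriv f x‖) + (Cc * (1 + |γ|)) * ‖f x‖^2) :=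
    setIntegral_mono_on int_restre int_g measurableSet_Icc hpt
  have hgval : (∫ x in Icc (-r) r, (-(γ^2) * ((a x)^2 * ‖f x‖^2)
          + (D₁ + D₂) * (‖f x‖ * ‖deriv f x‖) + (Cc * (1 + |γ|)) * ‖f x‖^2))
      = -(γ^2) * (∫ x in Icc (-r) r, (a x)^2 * ‖f x‖^2)
        + (D₁ + D₂) * (∫ x in Icc (-r) r, ‖f x‖ * ‖deriv f x‖)
        + (Cc * (1 + |γ|)) * (∫ x in Icc (-r) r, ‖f x‖^2) := by
    rw [integral_add (f := fun x => -(γ^2) * ((a x)^2 * ‖f x‖^2) + (D₁ + D₂) * (‖f x‖ * ‖deriv f x‖))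
        (g := fun x => (Cc * (1 + |γ|)) * ‖f x‖^2) (Continuous.integrableOn_Icc (by fun_prop)) (Continuous.integrableOn_Icc (by fun_prop)),
      integral_add (f := fun x => -(γ^2) * ((a x)^2 * ‖f x‖^2)) (g := fun x => (D₁ + D₂) * (‖f x‖ * ‖deriv f x‖))
        (Continuous.integrableOn_Icc (by fun_prop))
        (Continuous.integrableOn_Icc (by fun_prop)),
      integral_const_mul, integral_const_mul, integral_const_mul]
  -- Step D : Hölder
  have hhold : (∫ x in Icc (-r) r, ‖f x‖ * ‖deriv f x‖)
      ≤ L2 f (Icc (-r) r) * L2 (deriv f) (Icc (-r) r) := holder2 r f (deriv f) hcf hcdf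
  -- finish
  rw [hre]
  have hL2sq : L2 f (Icc (-r) r) ^ 2 = ∫ x in Icc (-r) r, ‖f x‖^2 := L2_sq f _
  have hL2nn : 0 ≤ L2 f (Icc (-r) r) := L2_nonneg f _
  have hL2nn' : 0 ≤ L2 (deriv f) (Icc (-r) r) := L2_nonneg (deriv f) _
  have hγnn : (0:ℝ) ≤ |γ| := abs_nonneg _
  have h1γ : (0:ℝ) ≤ 1 + |γ| := by linarith
  have hDnn : (0:ℝ) ≤ D₁ + D₂ := by positivity
  have hbound := hmono.trans_eq hgval
  rw [← hL2sq] at hbound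
  have hint2 : (D₁ + D₂) * (∫ x in Icc (-r) r, ‖f x‖ * ‖deriv f x‖)
      ≤ (D₁ + D₂) * (L2 f (Icc (-r) r) * L2 (deriv f) (Icc (-r) r)) :=
    mul_le_mul_of_nonneg_left hhold hDnn
  have nonneg1 : (0:ℝ) ≤ Cc * (L2 f (Icc (-r) r) * L2 (deriv f) (Icc (-r) r)) :=
    mul_nonneg hCcnn (mul_nonneg hL2nn hL2nn')
  have nonneg2 : (0:ℝ) ≤ (D₁ + D₂) * ((1 + |γ|) * L2 f (Icc (-r) r) ^ 2) :=
    mul_nonneg hDnn (mul_nonneg h1γ (sq_nonneg _))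
  nlinarith [hbound, hint2, nonneg1, nonneg2]
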